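/- arXiv:2502.03308 — 3 statements merged into one kernel-verified Lean document; each statement's English description precedes it below -/
import Mathlib

section
/- Let G be a finite group and fix an element x ∈ G of order p₁^{α₁} ⋯ p_k^{α_k}, where p₁, …, p_k are distinct primes and each α_i is a positive integer, and let x_i denote the p_i-component of x (the power of x that is a p_i-element, with x = x₁ ⋯ x_k and the x_i pairwise commuting). Then Nil_G(x) = ⋂_{i=1}^{k} Nil_G(x_i). -/
/-- The nilpotent neighborhood of `x`: elements `y` such that `⟨x,y⟩` is nilpotent. -/
def nilNbhd {G : Type*} [Group G] (x : G) : Set G :=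
  {y | Group.IsNilpotent ↥(Subgroup.closure ({x, y} : Set G))}

/-- The hypercenter of a finite group: the stable term of the upper central series. -/
noncomputable def hypercenter (G : Type*) [Group G] : Subgroup G :=
  upperCentralSeries G (Nat.card G)

instance hypercenter_normal (G : Type*) [Group G] : (hypercenter G).Normal :=
  (inferInstance : (Subgroup.upperCentralSeries G (Nat.card G)).Normal)

/-- The graph Γ(G): induced subgraph of the nilpotent graph on `G \ Z_∞(G)`. -/
def nilGraph (G : Type*) [Group G] : SimpleGraph {x : G // x ∉ hypercenter G} where
  Adj a b := a ≠ b ∧ Group.IsNilpotent ↥(Subgroup.closure ({a.1, b.1} : Set G))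
  symm := ⟨fun a b ⟨h1, h2⟩ => ⟨h1.symm, by rwa [Set.pair_comm]⟩⟩
  loopless := ⟨fun a h => h.1 rfl⟩

/-- The commuting graph on the non-central elements. -/
def commGraph (G : Type*) [Group G] : SimpleGraph {x : G // x ∉ Subgroup.center G} where
  Adj a b := a ≠ b ∧ a.1 * b.1 = b.1 * a.1
  symm := ⟨fun a b ⟨h1, h2⟩ => ⟨h1.symm, h2.symm⟩⟩
  loopless := ⟨fun a h => h.1 rfl⟩

/-- Diameter of a connected component: diameter of the induced subgraph on its support. -/
noncomputable def compDiam {V : Type*} (Γ : SimpleGraph V) (c : Γ.ConnectedComponent) : ℕ :=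
  (Γ.induce c.supp).diam

/-- `H` is a Frobenius complement in `G`. -/
def IsFrobeniusComplement {G : Type*} [Group G] (H : Subgroup G) : Prop :=
  H ≠ ⊥ ∧ H ≠ ⊤ ∧ ∀ g : G, g ∉ H → H ⊓ H.map (MulAut.conj g).toMonoidHom = ⊥

/-- `G` is a Frobenius group. -/
def IsFrobenius (G : Type*) [Group G] : Prop :=
  ∃ H : Subgroup G, IsFrobeniusComplement H

/-- `K` is the Frobenius kernel corresponding to the complement `H`. -/
def IsFrobeniusKernelOf {G : Type*} [Group G] (K H : Subgroup G) : Prop :=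
  IsFrobeniusComplement H ∧
    (K : Set G) = {1} ∪ {x : G | ∀ g : G, x ∉ H.map (MulAut.conj g).toMonoidHom}

/-- `K` is a Frobenius kernel of `G`. -/
def IsFrobeniusKernel {G : Type*} [Group G] (K : Subgroup G) : Prop :=
  ∃ H : Subgroup G, IsFrobeniusKernelOf K H

/-- `G` is a 2-Frobenius group. -/
def IsTwoFrobenius (G : Type*) [Group G] : Prop :=
  ∃ K L : Subgroup G, ∃ hK : K.Normal, L.Normal ∧ K ≤ L ∧
    IsFrobeniusKernel (K.subgroupOf L) ∧
    (haveI := hK; IsFrobeniusKernel (Subgroup.map (QuotientGroup.mk' K) L))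

/-- The Fitting subgroup: the largest normal nilpotent subgroup (of a finite group). -/
def fitting (G : Type*) [Group G] : Subgroup G :=
  sSup {H : Subgroup G | H.Normal ∧ Group.IsNilpotent ↥H}

/-!
If `⟨x, z⟩` is nilpotent, so is its subgroup `⟨xᵢ, z⟩`. Conversely, let `x_q` be the `q`-part of
`x` (trivial unless `q = pᵢ`) and `z_q` a Sylow `q`-subgroup of `⟨z⟩`. In the nilpotent group
`⟨x_q, z⟩` the Sylow subgroups are normal, so `⟨x_q, z_q⟩` is a `q`-group and `x_q` centralizes
`z_r` for `r ≠ q`. Hence the groups `P_q = ⟨x_q, z_q⟩` are nilpotent and pairwise commute, so their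
join is a quotient of their direct product and is nilpotent; it contains `x` and `z`.
-/

open Subgroup

section

variable {G : Type*} [Group G]

theorem Subgroup.isNilpotent_of_le {H K : Subgroup G} (hHK : H ≤ K)
    (hK : Group.IsNilpotent K) : Group.IsNilpotent H :=
  Group.nilpotent_of_mulEquiv (subgroupOfEquivOfLe hHK)

theorem Subgroup.isNilpotent_iSup_of_pairwise_le_centralizer {ι : Type*} [Fintype ι]
    (H : ι → Subgroup G) [∀ i, Group.IsNilpotent (H i)]
    (hH : Pairwise fun i j => H i ≤ centralizer (H j)) : Group.IsNilpotent ↥(⨆ i, H i) := by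
  have hcomm : Pairwise fun i j => ∀ x y : G, x ∈ H i → y ∈ H j → Commute x y :=
    fun i j hij x y hx hy => (hH hij hx y hy).symm
  rw [← noncommPiCoprod_range (hcomm := hcomm)]
  exact Group.nilpotent_of_surjective _ (noncommPiCoprod hcomm).rangeRestrict_surjective

theorem Subgroup.zpowers_le_centralizer_zpowers {a b : G} (h : Commute a b) :
    zpowers a ≤ centralizer (zpowers b) := by
  rintro _ ⟨m, rfl⟩ _ ⟨n, rfl⟩
  exact (h.zpow_zpow m n).symm.eq

theorem Sylow.iSup_eq_top [Finite G] (P : ∀ p, Sylow p G) {s : Finset ℕ}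
    (hs : (Nat.card G).primeFactors ⊆ s) : ⨆ p ∈ s, (P p : Subgroup G) = ⊤ := by
  set S := ⨆ p ∈ s, (P p : Subgroup G)
  refine eq_top_of_card_eq S (Nat.dvd_antisymm (card_subgroup_dvd_card S) ?_)
  refine (Nat.dvd_iff_prime_pow_dvd_dvd _ _).mpr fun q k hq hqk => ?_
  rcases k.eq_zero_or_pos with rfl | hk
  · simp
  have : Fact q.Prime := ⟨hq⟩
  have hqs : q ∈ s :=
    hs (Nat.mem_primeFactors.mpr ⟨hq, (dvd_pow_self q hk.ne').trans hqk, Nat.card_pos.ne'⟩)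
  exact ((P q).pow_dvd_card_of_pow_dvd_card hqk).trans
    (card_dvd_of_le (le_iSup₂_of_le q hqs le_rfl))

end

section Nilpotent

variable {G : Type*} [Group G] [Finite G] {K : Subgroup G} [Group.IsNilpotent K]
  {p q : ℕ} [Fact p.Prime] [Fact q.Prime] {A B : Subgroup G}

theorem IsPGroup.le_map_sylow_of_isNilpotent (hA : IsPGroup p A) (hAK : A ≤ K)
    (P : Sylow p K) : A ≤ (P : Subgroup K).map K.subtype := by
  have : Unique (Sylow p K) := Sylow.unique_of_normal P inferInstance
  obtain ⟨Q, hQ⟩ := (hA.comap_subtype (K := K)).exists_le_sylow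
  rw [Subsingleton.elim Q P] at hQ
  rw [← map_subgroupOf_eq_of_le hAK]
  exact map_mono hQ

theorem IsPGroup.sup_of_le_isNilpotent (hA : IsPGroup p A) (hB : IsPGroup p B)
    (hAK : A ≤ K) (hBK : B ≤ K) : IsPGroup p ↥(A ⊔ B) :=
  let P : Sylow p K := default
  (P.isPGroup'.map K.subtype).to_le
    (sup_le (hA.le_map_sylow_of_isNilpotent hAK P) (hB.le_map_sylow_of_isNilpotent hBK P))

theorem IsPGroup.le_centralizer_of_isNilpotent (hpq : p ≠ q) (hA : IsPGroup p A)
    (hB : IsPGroup q B) (hAK : A ≤ K) (hBK : B ≤ K) : A ≤ centralizer B := by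
  let P : Sylow p K := default
  let Q : Sylow q K := default
  have hPQ : (P : Subgroup K) ≤ centralizer Q := fun a ha b hb =>
    (commute_of_normal_of_disjoint _ _ inferInstance inferInstance
      (IsPGroup.disjoint_of_ne p q hpq _ _ P.isPGroup' Q.isPGroup') a b ha hb).symm.eq
  calc A ≤ (P : Subgroup K).map K.subtype := hA.le_map_sylow_of_isNilpotent hAK P
    _ ≤ (centralizer (Q : Set K)).map K.subtype := map_mono hPQ
    _ ≤ centralizer ((Q : Subgroup K).map K.subtype) := by
      rw [coe_map]; exact map_centralizer_le_centralizer_image _ _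
    _ ≤ centralizer B := centralizer_le (hB.le_map_sylow_of_isNilpotent hBK Q)

end Nilpotent

section ZPowersSylow

variable {G : Type*} [Group G]

/-- `⟨z⟩` is abelian, so this is its unique Sylow `q`-subgroup. -/
noncomputable def zpowersSylow (z : G) (q : ℕ) : Subgroup G :=
  ((default : Sylow q (zpowers z)) : Subgroup (zpowers z)).map (zpowers z).subtype

theorem zpowersSylow_le_zpowers (z : G) (q : ℕ) : zpowersSylow z q ≤ zpowers z :=
  map_subtype_le _

theorem isPGroup_zpowersSylow (z : G) (q : ℕ) : IsPGroup q (zpowersSylow z q) :=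
  (default : Sylow q (zpowers z)).isPGroup'.map _

theorem zpowers_le_iSup_zpowersSylow [Finite G] (z : G) :
    zpowers z ≤ ⨆ q ∈ (Nat.card G).primeFactors, zpowersSylow z q := by
  have hsub : (Nat.card (zpowers z)).primeFactors ⊆ (Nat.card G).primeFactors :=
    Nat.primeFactors_mono (card_subgroup_dvd_card _) Nat.card_pos.ne'
  intro g hg
  have hmem : (⟨g, hg⟩ : zpowers z) ∈ ⨆ q ∈ (Nat.card G).primeFactors,
      ((default : Sylow q (zpowers z)) : Subgroup (zpowers z)) := by
    rw [Sylow.iSup_eq_top _ hsub]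
    trivial
  simpa only [zpowersSylow, Subgroup.map_iSup, Subgroup.subtype_apply]
    using mem_map_of_mem (zpowers z).subtype hmem

end ZPowersSylow

section NilNbhd

variable {G : Type*} [Group G]

theorem nilNbhd_subset_nilNbhd_of_mem_zpowers {a x : G} (ha : a ∈ zpowers x) :
    nilNbhd x ⊆ nilNbhd a := fun _ hz =>
  isNilpotent_of_le ((closure_le _).mpr (Set.insert_subset (zpowers_le.mpr
    (subset_closure (Set.mem_insert x _)) ha) (Set.subset_insert x _ |>.trans subset_closure))) hz

theorem mem_nilNbhd_one (z : G) : z ∈ nilNbhd (1 : G) := by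
  change Group.IsNilpotent (closure {1, z})
  rw [closure_insert_one, ← zpowers_eq_closure]
  open scoped IsMulCommutative in infer_instance

theorem isNilpotent_closure_insert_image_of_mem_nilNbhd [Finite G] (z : G) (X : ℕ → G)
    (hcomm : ∀ q r, Commute (X q) (X r))
    (hX : ∀ q ∈ (Nat.card G).primeFactors, IsPGroup q (zpowers (X q)))
    (hXz : ∀ q ∈ (Nat.card G).primeFactors, z ∈ nilNbhd (X q)) :
    Group.IsNilpotent (closure (insert z (X '' (Nat.card G).primeFactors))) := by
  set T := (Nat.card G).primeFactors
  let P : T → Subgroup G := fun q => zpowers (X q) ⊔ zpowersSylow z q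
  have hX_le q : zpowers (X q) ≤ closure {X q, z} := zpowers_le.mpr (subset_closure (by simp))
  have hzS_le q r : zpowersSylow z r ≤ closure {X q, z} :=
    (zpowersSylow_le_zpowers z r).trans (zpowers_le.mpr (subset_closure (by simp)))
  have hP : ∀ q, Group.IsNilpotent (P q) := by
    rintro ⟨q, hq⟩
    have : Fact q.Prime := ⟨Nat.prime_of_mem_primeFactors hq⟩
    have : Group.IsNilpotent (closure {X q, z}) := hXz q hq
    exact ((hX q hq).sup_of_le_isNilpotent (isPGroup_zpowersSylow z q) (hX_le q)
      (hzS_le q q)).isNilpotent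
  have hXS : ∀ q ∈ T, ∀ r ∈ T, q ≠ r → zpowers (X q) ≤ centralizer (zpowersSylow z r) := by
    intro q hq r hr hqr
    have : Fact q.Prime := ⟨Nat.prime_of_mem_primeFactors hq⟩
    have : Fact r.Prime := ⟨Nat.prime_of_mem_primeFactors hr⟩
    have : Group.IsNilpotent (closure {X q, z}) := hXz q hq
    exact (hX q hq).le_centralizer_of_isNilpotent hqr (isPGroup_zpowersSylow z r) (hX_le q)
      (hzS_le q r)
  have hSS q r : zpowersSylow z q ≤ centralizer (zpowersSylow z r) :=
    ((zpowersSylow_le_zpowers z q).trans (le_centralizer _)).trans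
      (centralizer_le (zpowersSylow_le_zpowers z r))
  have hPP : Pairwise fun q r => P q ≤ centralizer (P r) := by
    rintro ⟨q, hq⟩ ⟨r, hr⟩ hqr
    have hqr : q ≠ r := fun h => hqr (Subtype.ext h)
    refine sup_le (le_centralizer_iff.mpr (sup_le ?_ ?_)) (le_centralizer_iff.mpr (sup_le ?_ ?_))
    · exact zpowers_le_centralizer_zpowers (hcomm r q)
    · exact le_centralizer_iff.mpr (hXS q hq r hr hqr)
    · exact hXS r hr q hq hqr.symm
    · exact hSS r q
  have hz_mem : z ∈ ⨆ q, P q := (zpowers_le_iSup_zpowersSylow z).trans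
    (iSup₂_le fun q hq => le_iSup_of_le ⟨q, hq⟩ le_sup_right) (mem_zpowers z)
  have hX_mem : X '' T ⊆ ((⨆ q, P q : Subgroup G) : Set G) := by
    rintro _ ⟨q, hq, rfl⟩
    exact le_iSup_of_le (f := P) ⟨q, hq⟩ le_sup_left (mem_zpowers (X q))
  exact isNilpotent_of_le ((closure_le _).mpr (Set.insert_subset hz_mem hX_mem))
    (isNilpotent_iSup_of_pairwise_le_centralizer P hPP)

end NilNbhd

theorem stmt_7_general (G : Type*) [Group G] [Finite G] (x : G) (k : ℕ)
    (p α : Fin k → ℕ) (hp : ∀ i, (p i).Prime) (hinj : Function.Injective p)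
    (hα : ∀ i, 0 < α i)
    (y : Fin k → G) (hy : ∀ i, y i ∈ Subgroup.zpowers x)
    (hyo : ∀ i, orderOf (y i) = p i ^ α i)
    (hcomm : ∀ i j, Commute (y i) (y j))
    (hxy : x = Finset.univ.noncommProd y fun i _ j _ _ => hcomm i j) :
    nilNbhd x = ⋂ i, nilNbhd (y i) := by
  refine Set.Subset.antisymm
    (Set.subset_iInter fun i => nilNbhd_subset_nilNbhd_of_mem_zpowers (hy i)) fun z hz => ?_
  rw [Set.mem_iInter] at hz
  set X := Function.extend p y 1
  have hX q : (∃ i, p i = q ∧ X q = y i) ∨ X q = 1 := by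
    by_cases h : ∃ i, p i = q
    · obtain ⟨i, rfl⟩ := h
      exact .inl ⟨i, rfl, hinj.extend_apply _ _ _⟩
    · exact .inr (Function.extend_apply' _ _ _ h)
  have hXx q : X q ∈ zpowers x := by
    rcases hX q with ⟨i, -, h⟩ | h <;> rw [h]
    exacts [hy i, one_mem _]
  have hpT i : p i ∈ (Nat.card G).primeFactors := Nat.mem_primeFactors.mpr ⟨hp i,
    (dvd_pow_self _ (hα i).ne').trans (hyo i ▸ orderOf_dvd_natCard (y i)), Nat.card_pos.ne'⟩
  have hxX : x ∈ closure (X '' (Nat.card G).primeFactors) := by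
    rw [hxy]
    exact noncommProd_mem _ _ fun i _ => subset_closure ⟨p i, hpT i, hinj.extend_apply _ _ _⟩
  refine isNilpotent_of_le ((closure_le _).mpr (Set.insert_subset ?_ ?_))
    (isNilpotent_closure_insert_image_of_mem_nilNbhd z X ?_ ?_ ?_)
  · exact closure_mono (Set.subset_insert _ _) hxX
  · exact Set.singleton_subset_iff.mpr (subset_closure (Set.mem_insert _ _))
  · exact fun q r => le_centralizer (zpowers x) (hXx r) (X q) (hXx q)
  · intro q _
    rcases hX q with ⟨i, rfl, h⟩ | h <;> rw [h]
    · exact IsPGroup.of_card (by rw [Nat.card_zpowers, hyo i])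
    · rw [zpowers_one_eq_bot]
      exact IsPGroup.of_bot
  · intro q _
    rcases hX q with ⟨i, rfl, h⟩ | h <;> rw [h]
    exacts [hz i, mem_nilNbhd_one z]

/-- Lemma: `Nil_G(x)` is the intersection of the `Nil_G(x_i)` over the prime components. -/
theorem stmt_7 (G : Type*) [Group G] [Finite G] (x : G) (k : ℕ)
    (p α : Fin k → ℕ) (hp : ∀ i, (p i).Prime) (hinj : Function.Injective p)
    (hα : ∀ i, 0 < α i) (hord : orderOf x = ∏ i, p i ^ α i)
    (y : Fin k → G) (hy : ∀ i, y i ∈ Subgroup.zpowers x)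
    (hyo : ∀ i, orderOf (y i) = p i ^ α i)
    (hcomm : ∀ i j, Commute (y i) (y j))
    (hxy : x = Finset.univ.noncommProd y fun i _ j _ _ => hcomm i j) :
    nilNbhd x = ⋂ i, nilNbhd (y i) :=
  stmt_7_general G x k p α hp hinj hα y hy hyo hcomm hxy
end

section
/- Let G be a finite group and let x, y ∈ G \ Z_∞(G) with xZ_∞(G) ≠ yZ_∞(G). Then the subgroup ⟨x, y⟩ of G is nilpotent if and only if the subgroup ⟨xZ_∞(G), yZ_∞(G)⟩ of G/Z_∞(G) is nilpotent. -/
/-!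
If `f : G →* H` has kernel inside the `n`-th centre `Z_n(G)`, then `f⁻¹(Z_k(H)) ≤ Z_{n+k}(G)`
for every `k`, since commutators with an element of `f⁻¹(Z_{k+1}(H))` land in `f⁻¹(Z_k(H))`.
Applied to the inclusion of `K = ⟨x, y⟩` (kernel trivial) this gives `Z_n(G) ∩ K ≤ Z_n(K)`;
applied to `K → K Z_n(G) / Z_n(G)` it shows that `K` is nilpotent as soon as its image modulo
`Z_n(G)` is. Taking `n` large enough that `Z_n(G) = Z_∞(G)` gives the theorem.
-/

namespace Subgroup

variable {G H : Type*} [Group G] [Group H]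

theorem comap_upperCentralSeries_le_of_ker_le {f : G →* H} {n : ℕ}
    (hf : f.ker ≤ upperCentralSeries G n) :
    ∀ k, (upperCentralSeries H k).comap f ≤ upperCentralSeries G (n + k)
  | 0 => hf
  | k + 1 => fun x hx => mem_upperCentralSeries_succ_iff.mpr fun y =>
      comap_upperCentralSeries_le_of_ker_le hf k <| by
        simpa using mem_upperCentralSeries_succ_iff.mp (mem_comap.mp hx) (f y)

theorem comap_subtype_upperCentralSeries_le (K : Subgroup G) (n : ℕ) :
    (upperCentralSeries G n).comap K.subtype ≤ upperCentralSeries K n := by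
  simpa using comap_upperCentralSeries_le_of_ker_le (f := K.subtype) (n := 0)
    (by simp) n

theorem isNilpotent_of_ker_le_upperCentralSeries (f : G →* H) [Group.IsNilpotent H] {n : ℕ}
    (hf : f.ker ≤ upperCentralSeries G n) : Group.IsNilpotent G :=
  ⟨⟨n + Group.nilpotencyClass H, top_le_iff.mp <| by
    simpa [upperCentralSeries_nilpotencyClass] using comap_upperCentralSeries_le_of_ker_le hf
      (Group.nilpotencyClass H)⟩⟩

theorem isNilpotent_map_mk'_iff {N : Subgroup G} [N.Normal] {n : ℕ}
    (hN : N ≤ upperCentralSeries G n) (K : Subgroup G) :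
    Group.IsNilpotent (K.map (QuotientGroup.mk' N)) ↔ Group.IsNilpotent K := by
  let f : K →* K.map (QuotientGroup.mk' N) := (QuotientGroup.mk' N).subgroupMap K
  have hker : f.ker ≤ upperCentralSeries K n := by
    refine le_trans (fun g hg => ?_) (K.comap_subtype_upperCentralSeries_le n)
    have hg : QuotientGroup.mk' N (g : G) = 1 := congrArg Subtype.val hg
    exact hN (by simpa using hg)
  exact ⟨fun _ => isNilpotent_of_ker_le_upperCentralSeries f hker,
    fun _ => Group.nilpotent_of_surjective f ((QuotientGroup.mk' N).subgroupMap_surjective K)⟩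

end Subgroup

theorem stmt_11_general (G : Type*) [Group G] (x y : G) :
    Group.IsNilpotent ↥(Subgroup.closure ({x, y} : Set G)) ↔
      Group.IsNilpotent ↥(Subgroup.closure
        ({QuotientGroup.mk (s := hypercenter G) x, QuotientGroup.mk (s := hypercenter G) y} :
          Set (G ⧸ hypercenter G))) := by
  have h := Subgroup.isNilpotent_map_mk'_iff (le_refl (hypercenter G)) (.closure {x, y})
  rw [MonoidHom.map_closure, Set.image_pair] at h
  exact h.symm

/-- Adjacency in Γ(G) corresponds to adjacency in Γ(G/Z_∞(G)). -/
theorem stmt_11 (G : Type*) [Group G] [Finite G] (x y : G)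
    (hx : x ∉ hypercenter G) (hy : y ∉ hypercenter G)
    (hxy : QuotientGroup.mk (s := hypercenter G) x ≠ QuotientGroup.mk (s := hypercenter G) y) :
    Group.IsNilpotent ↥(Subgroup.closure ({x, y} : Set G)) ↔
      Group.IsNilpotent ↥(Subgroup.closure
        ({QuotientGroup.mk (s := hypercenter G) x, QuotientGroup.mk (s := hypercenter G) y} :
          Set (G ⧸ hypercenter G))) :=
  stmt_11_general G x y
end

section
/- Let G be a finite solvable group with trivial center and let x be a nontrivial element of G whose order is not coprime to |Fit(G)|. Then x lies in the connected component of Γ(G) containing Fit(G) \ {1}, and there exists a nontrivial element w ∈ Fit(G) such that the distance in Γ(G) between x and w is at most 2. -/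
open Subgroup

theorem hypercenter_eq_bot_of_center_eq_bot {G : Type*} [Group G] (hZ : center G = ⊥) :
    hypercenter G = ⊥ :=
  (Subgroup.upperCentralSeries.eq_ge_of_eq_succ (Nat.zero_le (Nat.card G))
    (by rw [Subgroup.upperCentralSeries_zero, Subgroup.upperCentralSeries_one, hZ])).symm

theorem Group.IsNilpotent.of_le {G : Type*} [Group G] {H K : Subgroup G} (hHK : H ≤ K)
    (hK : Group.IsNilpotent K) : Group.IsNilpotent H :=
  nilpotent_of_mulEquiv (subgroupOfEquivOfLe hHK)

theorem SimpleGraph.reachable_and_dist_le_of_edist_le {V : Type*} {Γ : SimpleGraph V} {u v : V}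
    {n : ℕ} (h : Γ.edist u v ≤ n) : Γ.Reachable u v ∧ Γ.dist u v ≤ n := by
  have hr : Γ.Reachable u v := Γ.reachable_of_edist_ne_top (h.trans_lt (ENat.natCast_lt_top n)).ne
  exact ⟨hr, by exact_mod_cast hr.coe_dist_eq_edist ▸ h⟩

theorem nilGraph_edist_le_one {G : Type*} [Group G] {K : Subgroup G} (hK : Group.IsNilpotent K)
    {a b : {g : G // g ∉ hypercenter G}} (ha : a.1 ∈ K) (hb : b.1 ∈ K) :
    (nilGraph G).edist a b ≤ 1 := by
  rw [SimpleGraph.edist_le_one_iff_adj_or_eq, or_iff_not_imp_right]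
  refine fun hab => ⟨hab, hK.of_le ?_⟩
  exact (closure_le K).mpr (Set.insert_subset ha (Set.singleton_subset_iff.mpr hb))

section Fitting

variable {G : Type*} [Group G] {p : ℕ} [Fact p.Prime]

theorem not_dvd_relIndex_sup {H K J : Subgroup G} [H.Normal] [J.Normal] (hJ : J ≤ H ⊔ K)
    (hH : ¬ p ∣ J.relIndex H) (hK : ¬ p ∣ J.relIndex K) : ¬ p ∣ J.relIndex (H ⊔ K) := by
  have hHJ : H ⊔ J ≤ H ⊔ K := sup_le le_sup_left hJ
  rw [← relIndex_mul_relIndex J (H ⊔ J) (H ⊔ K) le_sup_right hHJ, relIndex_sup_right,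
    show H ⊔ K = K ⊔ (H ⊔ J) from le_antisymm
      (sup_le (le_sup_left.trans le_sup_right) le_sup_left) (sup_le le_sup_right hHJ),
    relIndex_sup_right]
  exact (Nat.Prime.dvd_mul Fact.out).not.mpr
    (not_or.mpr ⟨hH, fun h => hK (h.trans (relIndex_dvd_of_le_left K le_sup_right))⟩)

variable [Finite G]

theorem exists_normal_isPGroup_le_not_dvd_relIndex {H : Subgroup G} [H.Normal]
    (hH : Group.IsNilpotent H) :
    ∃ A : Subgroup G, A.Normal ∧ IsPGroup p A ∧ A ≤ H ∧ ¬ p ∣ A.relIndex H := by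
  let P : Sylow p H := default
  have hSylow := ((Group.isNilpotent_of_finite_tfae (G := H)).out 0 3).mp hH
  have hP : (P : Subgroup H).Normal := hSylow p inferInstance P
  have := P.characteristic_of_normal hP
  refine ⟨(P : Subgroup H).map H.subtype, inferInstance, P.isPGroup'.map _, map_subtype_le _, ?_⟩
  rw [relIndex, subgroupOf, comap_map_eq_self_of_injective H.subtype_injective]
  exact P.not_dvd_index

theorem isNilpotent_sup_of_normal {H K : Subgroup G} [H.Normal] [K.Normal]
    (hH : Group.IsNilpotent H) (hK : Group.IsNilpotent K) : Group.IsNilpotent ↥(H ⊔ K) := by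
  refine ((Group.isNilpotent_of_finite_tfae (G := ↥(H ⊔ K))).out 3 0).mp ?_
  intro p _ P
  obtain ⟨A, _, hA, hAH, hAi⟩ := exists_normal_isPGroup_le_not_dvd_relIndex (p := p) hH
  obtain ⟨B, _, hB, hBK, hBi⟩ := exists_normal_isPGroup_le_not_dvd_relIndex (p := p) hK
  have hJ : A ⊔ B ≤ H ⊔ K := sup_le_sup hAH hBK
  have hJp : IsPGroup p ((A ⊔ B).subgroupOf (H ⊔ K)) :=
    (hA.to_sup_of_normal_right hB).of_equiv (subgroupOfEquivOfLe hJ).symm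
  have hJi : ¬ p ∣ ((A ⊔ B).subgroupOf (H ⊔ K)).index :=
    not_dvd_relIndex_sup hJ (fun h => hAi (h.trans (relIndex_dvd_of_le_left H le_sup_left)))
      (fun h => hBi (h.trans (relIndex_dvd_of_le_left K le_sup_right)))
  rw [(hJp.toSylow hJi).is_maximal' P.isPGroup' (hJp.le_sylow_of_normal P), IsPGroup.toSylow_coe]
  infer_instance

end Fitting

instance fitting_normal (G : Type*) [Group G] : (fitting G).Normal :=
  sSup_normal _ fun _ hH => hH.1

theorem isNilpotent_fitting (G : Type*) [Group G] [Finite G] : Group.IsNilpotent (fitting G) := by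
  have hclosed : SupClosed {H : Subgroup G | H.Normal ∧ Group.IsNilpotent H} := fun H hH K hK => by
    have := hH.1
    have := hK.1
    exact ⟨inferInstance, isNilpotent_sup_of_normal hH.2 hK.2⟩
  exact (hclosed.sSup_mem (Set.toFinite _) ⟨inferInstance, inferInstance⟩ le_rfl).2

theorem stmt_15_general (G : Type*) [Group G] [Finite G]
    (hZ : Subgroup.center G = ⊥) (x : {g : G // g ∉ hypercenter G})
    (hx : ¬ Nat.Coprime (orderOf (x : G)) (Nat.card (fitting G))) :
    (∀ w : {g : G // g ∉ hypercenter G}, (w : G) ∈ fitting G →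
        (nilGraph G).Reachable x w) ∧
      ∃ w : {g : G // g ∉ hypercenter G}, (w : G) ∈ fitting G ∧
        (nilGraph G).Reachable x w ∧ (nilGraph G).dist x w ≤ 2 := by
  obtain ⟨p, hp, hpx, hpF⟩ := Nat.Prime.not_coprime_iff_dvd.mp hx
  have := Fact.mk hp
  have vertex (g : G) (hg : g ≠ 1) : g ∉ hypercenter G := by
    rwa [hypercenter_eq_bot_of_center_eq_bot hZ, mem_bot]
  set y := (x : G) ^ (orderOf (x : G) / p)
  have hy : orderOf y = p := orderOf_pow_orderOf_div (orderOf_pos _).ne' hpx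
  obtain ⟨Q, hyQ⟩ : ∃ Q : Sylow p G, zpowers y ≤ Q :=
    (IsPGroup.of_card (n := 1) (by rw [Nat.card_zpowers, hy, pow_one])).exists_le_sylow
  obtain ⟨A, _, hA, hAF, hAi⟩ :=
    exists_normal_isPGroup_le_not_dvd_relIndex (p := p) (isNilpotent_fitting G)
  obtain ⟨w, hwA, hw1⟩ := (bot_or_exists_ne_one A).resolve_left
    (by rintro rfl; exact hAi (by rwa [relIndex_bot_left]))
  let yv : {g : G // g ∉ hypercenter G} :=
    ⟨y, vertex y fun h => hp.ne_one (by rw [← hy, h, orderOf_one])⟩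
  let wv : {g : G // g ∉ hypercenter G} := ⟨w, vertex w hw1⟩
  have hxy : (nilGraph G).edist x yv ≤ 1 :=
    nilGraph_edist_le_one (K := zpowers (x : G))
      (by open scoped IsMulCommutative in infer_instance) (mem_zpowers _)
      (pow_mem (mem_zpowers _) _)
  have hyw : (nilGraph G).edist yv wv ≤ 1 :=
    nilGraph_edist_le_one Q.isPGroup'.isNilpotent (hyQ (mem_zpowers y))
      (hA.le_sylow_of_normal Q hwA)
  obtain ⟨hreach, hdist⟩ := SimpleGraph.reachable_and_dist_le_of_edist_le (n := 2)
    ((SimpleGraph.edist_triangle).trans (add_le_add hxy hyw))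
  refine ⟨fun w' hw' => hreach.trans ?_, wv, hAF hwA, hreach, hdist⟩
  exact (SimpleGraph.reachable_and_dist_le_of_edist_le (n := 1)
    (nilGraph_edist_le_one (isNilpotent_fitting G) (hAF hwA) hw')).1

/-- Elements of order not coprime to |Fit(G)| lie in the component containing
`Fit(G) \ {1}`, at distance at most 2 from it. -/
theorem stmt_15 (G : Type*) [Group G] [Finite G] (hsolv : IsSolvable G)
    (hZ : Subgroup.center G = ⊥) (x : {g : G // g ∉ hypercenter G})
    (hx : ¬ Nat.Coprime (orderOf (x : G)) (Nat.card (fitting G))) :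
    (∀ w : {g : G // g ∉ hypercenter G}, (w : G) ∈ fitting G →
        (nilGraph G).Reachable x w) ∧
      ∃ w : {g : G // g ∉ hypercenter G}, (w : G) ∈ fitting G ∧
        (nilGraph G).Reachable x w ∧ (nilGraph G).dist x w ≤ 2 :=
  stmt_15_general G hZ x hx
end
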